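/- Let {f_n}_{n=1}^N ⊂ C^d be phase retrievable with upper frame bound C, and suppose M_F satisfies the c-stability condition: ‖M_F(x x^*) − M_F(y y^*)‖ ≥ c‖x x^* − y y^*‖_* for all x, y ∈ C^d. Fix x_0 ∈ C^d, b = M_F(x_0 x_0^*), λ > 0, and let b′ ∈ R^N with ‖b − b′‖ ≤ ε. If x, y ∈ C^d satisfy ‖M_F(x y^*) − b′‖^2 + λ‖x − y‖^2 ≤ δ^2, then with z = (x+y)/2 one has ‖z z^* − x_0 x_0^*‖_* ≤ (1/c)(C δ^2/(4λ) + δ + ε). -/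

import Mathlib

open Matrix BigOperators

/-- The nuclear norm of a square complex matrix: the sum of its singular values,
i.e. the square roots of the eigenvalues of `X * Xᴴ`. -/
noncomputable def nuclearNorm {d : ℕ} (X : Matrix (Fin d) (Fin d) ℂ) : ℝ :=
  ∑ i, Real.sqrt ((Matrix.isHermitian_mul_conjTranspose_self X).eigenvalues i)

lemma re_star_dot {m : ℕ} (u : Fin m → ℂ) :
    (star u ⬝ᵥ u).re = ∑ i, ‖u i‖ ^ 2 := by
  rw [dotProduct, Complex.re_sum]
  refine Finset.sum_congr rfl fun i _ => ?_
  simp [Complex.sq_norm, Complex.normSq_apply, Complex.mul_re]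

lemma frame_bound {d N : ℕ} (F : Matrix (Fin d) (Fin N) ℂ) {C : ℝ}
    (hC : IsGreatest (Set.range
      (Matrix.isHermitian_mul_conjTranspose_self F).eigenvalues) C)
    (w : Fin d → ℂ) :
    ∑ n, ‖(Fᴴ *ᵥ w) n‖ ^ 2 ≤ C * ∑ i, ‖w i‖ ^ 2 := by
  set hA := Matrix.isHermitian_mul_conjTranspose_self F with hhA
  set U : Matrix (Fin d) (Fin d) ℂ := (hA.eigenvectorUnitary : Matrix (Fin d) (Fin d) ℂ) with hU
  set v : Fin d → ℂ := star U *ᵥ w with hv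
  have hstarv : star v = star w ᵥ* U := by
    rw [hv, star_mulVec, Matrix.star_eq_conjTranspose, conjTranspose_conjTranspose]
  have hUU : U * star U = 1 := (Matrix.mem_unitaryGroup_iff).mp hA.eigenvectorUnitary.2
  have hnorm : ∑ i, ‖v i‖ ^ 2 = ∑ i, ‖w i‖ ^ 2 := by
    rw [← re_star_dot, ← re_star_dot, hstarv, ← dotProduct_mulVec, hv, mulVec_mulVec, hUU,
      one_mulVec]
  have hl : ∑ n, ‖(Fᴴ *ᵥ w) n‖ ^ 2 = (star w ⬝ᵥ ((F * Fᴴ) *ᵥ w)).re := by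
    rw [← re_star_dot, star_mulVec, conjTranspose_conjTranspose, ← mulVec_mulVec,
      dotProduct_mulVec]
    simp [dotProduct_mulVec]
  have hs : (star w ⬝ᵥ ((F * Fᴴ) *ᵥ w)).re
      = ∑ i, hA.eigenvalues i * ‖v i‖ ^ 2 := by
    conv_lhs => rw [hA.spectral_theorem, Unitary.conjStarAlgAut_apply]
    rw [← mulVec_mulVec, ← mulVec_mulVec, dotProduct_mulVec, ← hstarv, ← hv]
    rw [dotProduct, Complex.re_sum]
    refine Finset.sum_congr rfl fun i _ => ?_
    rw [mulVec_diagonal]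
    simp [Complex.sq_norm, Complex.normSq_apply, Complex.mul_re, Complex.mul_im]
    ring
  rw [hl, hs, ← hnorm, Finset.mul_sum]
  refine Finset.sum_le_sum fun i _ => ?_
  exact mul_le_mul_of_nonneg_right (hC.2 ⟨i, rfl⟩) (by positivity)

lemma half_abs_sq (a b : ℂ) : (‖(1/2 : ℂ) * (a + b)‖)^2
    = (a * (starRingEnd ℂ) b).re + (1/4) * (‖a - b‖)^2 := by
  have h : ((1:ℂ)/2) = ((1/2 : ℝ) : ℂ) := by norm_num
  rw [h, norm_mul, Complex.norm_real]
  simp only [Complex.sq_norm, Complex.normSq_apply, Complex.mul_re,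
    Complex.add_re, Complex.add_im, Complex.sub_re, Complex.sub_im, Complex.conj_re,
    Complex.conj_im, mul_pow, abs_div, abs_one]
  norm_num
  ring

lemma MF_entry {d : ℕ} (g x y : Fin d → ℂ) :
    star g ⬝ᵥ (Matrix.vecMulVec x (star y)).mulVec g
      = (star g ⬝ᵥ x) * (starRingEnd ℂ) (star g ⬝ᵥ y) := by
  simp only [dotProduct, Matrix.mulVec, Matrix.vecMulVec_apply, dotProduct, map_sum,
    Finset.mul_sum, Finset.sum_mul, RingHom.map_mul, Pi.star_apply, Complex.star_def,
    Complex.conj_conj]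
  rw [Finset.sum_comm]
  congr 1; ext i; congr 1; ext j; ring

/-- robustness of the regularized bi-variate formulation. If `{f_n}` is phase
retrievable with upper frame bound `C` (largest eigenvalue of `F Fᴴ`), `M_F` satisfies the
`c`-stability condition, `b = M_F(x₀x₀^*)`, `‖b − b′‖ ≤ ε`, and
`‖M_F(x y^*) − b′‖² + λ‖x−y‖² ≤ δ²`, then with `z = (x+y)/2` one has
`‖z z^* − x₀ x₀^*‖_* ≤ (1/c)(Cδ²/(4λ) + δ + ε)`. -/
theorem robustness_of_regularized_min
    (d N : ℕ) (f : Fin N → Fin d → ℂ)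
    (hPR : ∀ x y : Fin d → ℂ,
      (∀ n, ‖star (f n) ⬝ᵥ x‖ = ‖star (f n) ⬝ᵥ y‖) →
      Matrix.vecMulVec x (star x) = Matrix.vecMulVec y (star y))
    (C : ℝ)
    (hC : IsGreatest (Set.range
      (Matrix.isHermitian_mul_conjTranspose_self
        (Matrix.of fun i n => f n i : Matrix (Fin d) (Fin N) ℂ)).eigenvalues) C)
    (c : ℝ) (hc : 0 < c)
    (hstab : ∀ x y : Fin d → ℂ,
      Real.sqrt (∑ n, (‖star (f n) ⬝ᵥ x‖ ^ 2 -
          ‖star (f n) ⬝ᵥ y‖ ^ 2) ^ 2) ≥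
        c * nuclearNorm (Matrix.vecMulVec x (star x) - Matrix.vecMulVec y (star y)))
    (x₀ : Fin d → ℂ) (b b' : Fin N → ℝ)
    (hb : ∀ n, b n = ‖star (f n) ⬝ᵥ x₀‖ ^ 2)
    (lam ε δ : ℝ) (hlam : 0 < lam) (hδ : 0 ≤ δ)
    (hbb' : Real.sqrt (∑ n, (b n - b' n) ^ 2) ≤ ε)
    (x y : Fin d → ℂ)
    (hxy : (∑ n, ‖star (f n) ⬝ᵥ (Matrix.vecMulVec x (star y)).mulVec (f n) - (b' n : ℂ)‖ ^ 2) +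
      lam * ∑ i, ‖x i - y i‖ ^ 2 ≤ δ ^ 2) :
    nuclearNorm (Matrix.vecMulVec (((1 : ℂ) / 2) • (x + y)) (star (((1 : ℂ) / 2) • (x + y))) -
        Matrix.vecMulVec x₀ (star x₀)) ≤
      (1 / c) * (C * δ ^ 2 / (4 * lam) + δ + ε) := by
  set F : Matrix (Fin d) (Fin N) ℂ := (Matrix.of fun i n => f n i) with hF
  set z : Fin d → ℂ := ((1 : ℂ) / 2) • (x + y) with hz
  set a : Fin N → ℂ := fun n => star (f n) ⬝ᵥ x with ha
  set bb : Fin N → ℂ := fun n => star (f n) ⬝ᵥ y with hbbd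
  -- basic rewrites
  have hFH : ∀ (w : Fin d → ℂ) (n : Fin N), (Fᴴ *ᵥ w) n = star (f n) ⬝ᵥ w := by
    intro w n
    simp [Matrix.mulVec, Matrix.conjTranspose_apply, dotProduct, hF]
  have hzdot : ∀ n, star (f n) ⬝ᵥ z = ((1:ℂ)/2) * (a n + bb n) := by
    intro n
    rw [hz]
    rw [dotProduct_smul, dotProduct_add]
    simp [ha, hbbd, smul_eq_mul]
  have habdiff : ∀ n, a n - bb n = star (f n) ⬝ᵥ (x - y) := by
    intro n; rw [dotProduct_sub]
  -- nonneg sums from hxy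
  have hS1 : (0:ℝ) ≤ ∑ n, ‖star (f n) ⬝ᵥ (Matrix.vecMulVec x (star y)).mulVec (f n) - (b' n : ℂ)‖ ^ 2 :=
    Finset.sum_nonneg fun n _ => by positivity
  have hS2 : (0:ℝ) ≤ ∑ i, ‖x i - y i‖ ^ 2 :=
    Finset.sum_nonneg fun n _ => by positivity
  have hS1le : ∑ n, ‖star (f n) ⬝ᵥ (Matrix.vecMulVec x (star y)).mulVec (f n) - (b' n : ℂ)‖ ^ 2 ≤ δ^2 := by
    nlinarith [mul_nonneg hlam.le hS2]
  have hS2le : ∑ i, ‖x i - y i‖ ^ 2 ≤ δ^2 / lam := by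
    rw [le_div_iff₀ hlam]
    nlinarith
  have hCnn : 0 ≤ C := by
    obtain ⟨i, hi⟩ := hC.1
    exact hi ▸ Matrix.eigenvalues_self_mul_conjTranspose_nonneg F i
  -- the three components
  set u1 : EuclideanSpace ℝ (Fin N) := WithLp.toLp 2 (fun n => (1/4) * (‖a n - bb n‖)^2) with hu1
  set u2 : EuclideanSpace ℝ (Fin N) :=
    WithLp.toLp 2 (fun n => (a n * (starRingEnd ℂ) (bb n)).re - b' n) with hu2
  set u3 : EuclideanSpace ℝ (Fin N) := WithLp.toLp 2 (fun n => b' n - b n) with hu3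
  have normeq : ∀ u : EuclideanSpace ℝ (Fin N), ‖u‖ = Real.sqrt (∑ n, (u n)^2) := by
    intro u
    rw [EuclideanSpace.norm_eq]
    congr 1
    exact Finset.sum_congr rfl fun n _ => by rw [Real.norm_eq_abs, sq_abs]
  have key : ∀ n, ‖star (f n) ⬝ᵥ z‖ ^ 2 - ‖star (f n) ⬝ᵥ x₀‖ ^ 2
      = u1 n + u2 n + u3 n := by
    intro n
    rw [hzdot n, half_abs_sq, ← hb n, hu1, hu2, hu3, PiLp.toLp_apply, PiLp.toLp_apply, PiLp.toLp_apply]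
    ring
  -- bound ‖u1‖
  have hu1nn : ∀ n, (0:ℝ) ≤ u1 n := fun n => by rw [hu1, PiLp.toLp_apply]; positivity
  have bound1 : ‖u1‖ ≤ C * δ^2 / (4 * lam) := by
    rw [normeq]
    have h1 : Real.sqrt (∑ n, (u1 n)^2) ≤ ∑ n, u1 n := by
      rw [← Real.sqrt_sq (Finset.sum_nonneg fun n _ => hu1nn n)]
      exact Real.sqrt_le_sqrt (Finset.sum_sq_le_sq_sum_of_nonneg fun n _ => hu1nn n)
    refine h1.trans ?_
    have h2 : ∑ n, u1 n = (1/4) * ∑ n, ‖(Fᴴ *ᵥ (x - y)) n‖ ^ 2 := by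
      rw [Finset.mul_sum]
      refine Finset.sum_congr rfl fun n _ => ?_
      rw [hFH, ← habdiff]
    rw [h2]
    have h3 := frame_bound F hC (x - y)
    have h4 : ∑ i, ‖(x - y) i‖ ^ 2 = ∑ i, ‖x i - y i‖ ^ 2 := by
      refine Finset.sum_congr rfl fun i _ => by rw [Pi.sub_apply]
    rw [h4] at h3
    calc (1/4) * ∑ n, ‖(Fᴴ *ᵥ (x - y)) n‖ ^ 2
        ≤ (1/4) * (C * ∑ i, ‖x i - y i‖ ^ 2) := by linarith
      _ ≤ (1/4) * (C * (δ^2 / lam)) := by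
          have := mul_le_mul_of_nonneg_left hS2le hCnn
          linarith
      _ = C * δ^2 / (4 * lam) := by field_simp
  -- bound ‖u2‖
  have bound2 : ‖u2‖ ≤ δ := by
    rw [normeq]
    have h1 : ∑ n, (u2 n)^2 ≤ ∑ n, ‖star (f n) ⬝ᵥ (Matrix.vecMulVec x (star y)).mulVec (f n) - (b' n : ℂ)‖ ^ 2 := by
      refine Finset.sum_le_sum fun n _ => ?_
      rw [MF_entry]
      show ((a n * (starRingEnd ℂ) (bb n)).re - b' n)^2
          ≤ ‖a n * (starRingEnd ℂ) (bb n) - (b' n : ℂ)‖ ^ 2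
      have hre : (a n * (starRingEnd ℂ) (bb n)).re - b' n
          = (a n * (starRingEnd ℂ) (bb n) - (b' n : ℂ)).re := by
        simp [Complex.sub_re]
      rw [hre]
      calc (a n * (starRingEnd ℂ) (bb n) - (b' n : ℂ)).re ^ 2
          = |(a n * (starRingEnd ℂ) (bb n) - (b' n : ℂ)).re| ^ 2 := (sq_abs _).symm
        _ ≤ ‖a n * (starRingEnd ℂ) (bb n) - (b' n : ℂ)‖ ^ 2 :=
            pow_le_pow_left₀ (abs_nonneg _) (Complex.abs_re_le_norm _) 2
    calc Real.sqrt (∑ n, (u2 n)^2) ≤ Real.sqrt (δ^2) :=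
          Real.sqrt_le_sqrt (h1.trans hS1le)
      _ = δ := Real.sqrt_sq hδ
  -- bound ‖u3‖
  have bound3 : ‖u3‖ ≤ ε := by
    rw [normeq]
    have : ∑ n, (u3 n)^2 = ∑ n, (b n - b' n)^2 := by
      refine Finset.sum_congr rfl fun n _ => ?_
      show (b' n - b n)^2 = (b n - b' n)^2
      ring
    rw [this]; exact hbb'
  -- main chain
  have hmain := hstab z x₀
  have heq : Real.sqrt (∑ n, (‖star (f n) ⬝ᵥ z‖ ^ 2 -
      ‖star (f n) ⬝ᵥ x₀‖ ^ 2) ^ 2) = ‖u1 + u2 + u3‖ := by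
    rw [normeq]
    congr 1
    refine Finset.sum_congr rfl fun n _ => ?_
    rw [key n]
    rfl
  rw [heq] at hmain
  have htri : ‖u1 + u2 + u3‖ ≤ C * δ^2 / (4 * lam) + δ + ε :=
    (norm_add₃_le).trans (by linarith)
  have hfin : c * nuclearNorm (Matrix.vecMulVec z (star z) - Matrix.vecMulVec x₀ (star x₀))
      ≤ C * δ^2 / (4 * lam) + δ + ε := le_trans hmain htri
  rw [ge_iff_le] at hmain
  calc nuclearNorm (Matrix.vecMulVec z (star z) - Matrix.vecMulVec x₀ (star x₀))
      = (1/c) * (c * nuclearNorm (Matrix.vecMulVec z (star z) - Matrix.vecMulVec x₀ (star x₀))) := by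
        field_simp
    _ ≤ (1 / c) * (C * δ ^ 2 / (4 * lam) + δ + ε) := by
        apply mul_le_mul_of_nonneg_left hfin
        positivity
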